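/- Let (s_n) be a real sequence and n ≥ 0 be such that Δs_n ≠ 0, Δs_{n+1} ≠ 0, Δs_{n+2} ≠ 0, the quantity Δ²ϑ₁^{(n)} arising in Brezinski's theta algorithm is nonzero, and [Δs_{n+2}][Δ²s_n] − [Δs_n][Δ²s_{n+1}] ≠ 0. Then the element ϑ₂^{(n)} of Brezinski's theta algorithm has the closed form ϑ₂^{(n)} = s_{n+1} − ([Δs_n][Δs_{n+1}][Δ²s_{n+1}]) / ([Δs_{n+2}][Δ²s_n] − [Δs_n][Δ²s_{n+1}]). -/
import Mathlib


/-- Brezinski's theta algorithm, with the first index shifted by one: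
`theta s 0 n = ϑ₋₁⁽ⁿ⁾ = 0`, `theta s 1 n = ϑ₀⁽ⁿ⁾ = sₙ`, and for the mathematical
index `m = k+1` (Lean index `k+2`):
odd `m = 2j+1`: `ϑ_{2j+1}⁽ⁿ⁾ = ϑ_{2j-1}⁽ⁿ⁺¹⁾ + 1/(Δϑ_{2j}⁽ⁿ⁾)`;
even `m = 2j+2`: `ϑ_{2j+2}⁽ⁿ⁾ = ϑ_{2j}⁽ⁿ⁺¹⁾ + (Δϑ_{2j}⁽ⁿ⁺¹⁾·Δϑ_{2j+1}⁽ⁿ⁺¹⁾)/(Δ²ϑ_{2j+1}⁽ⁿ⁾)`,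
where `Δ` acts on the superscript `n` only. -/
noncomputable def theta (s : ℕ → ℝ) : ℕ → ℕ → ℝ
  | 0, _ => 0
  | 1, n => s n
  | (k + 2), n =>
      if k % 2 = 0 then
        -- mathematical index k+1 is odd
        theta s k (n + 1) + 1 / (theta s (k + 1) (n + 1) - theta s (k + 1) n)
      else
        -- mathematical index k+1 is even
        theta s k (n + 1) +
          ((theta s k (n + 2) - theta s k (n + 1)) *
            (theta s (k + 1) (n + 2) - theta s (k + 1) (n + 1))) /
          (theta s (k + 1) (n + 2) - 2 * theta s (k + 1) (n + 1) + theta s (k + 1) n)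

/-- closed-form expression for `ϑ₂⁽ⁿ⁾` of Brezinski's theta algorithm.
(In `theta`, the mathematical entry `ϑ_m⁽ⁱ⁾` is `theta s (m+1) i`.) -/
theorem theta_two_closed_form (s : ℕ → ℝ) (n : ℕ)
    (h1 : s (n + 1) - s n ≠ 0) (h2 : s (n + 2) - s (n + 1) ≠ 0)
    (h3 : s (n + 3) - s (n + 2) ≠ 0)
    (h4 : theta s 2 (n + 2) - 2 * theta s 2 (n + 1) + theta s 2 n ≠ 0)
    (h5 : (s (n + 3) - s (n + 2)) * (s (n + 2) - 2 * s (n + 1) + s n) -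
          (s (n + 1) - s n) * (s (n + 3) - 2 * s (n + 2) + s (n + 1)) ≠ 0) :
    theta s 3 n =
      s (n + 1) -
        ((s (n + 1) - s n) * (s (n + 2) - s (n + 1)) *
          (s (n + 3) - 2 * s (n + 2) + s (n + 1))) /
        ((s (n + 3) - s (n + 2)) * (s (n + 2) - 2 * s (n + 1) + s n) -
          (s (n + 1) - s n) * (s (n + 3) - 2 * s (n + 2) + s (n + 1))) := by
  have e2 : ∀ m, theta s 2 m = 1 / (s (m+1) - s m) := by
    intro m; simp [theta]
  have e3 : theta s 3 n = s (n+1) +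
      ((s (n+2) - s (n+1)) * (theta s 2 (n+2) - theta s 2 (n+1))) /
        (theta s 2 (n+2) - 2 * theta s 2 (n+1) + theta s 2 n) := by
    simp [theta]
  rw [e3]
  rw [e2, e2, e2] at h4 ⊢
  have h4' : (s (n+3) - s (n+2)) * (s (n+2) - 2*s (n+1) + s n) -
      (s (n+1) - s n) * (s (n+3) - 2*s (n+2) + s (n+1)) ≠ 0 := h5
  have key : 1 / (s (n+2+1) - s (n+2)) - 2 * (1 / (s (n+1+1) - s (n+1))) + 1 / (s (n+1) - s n)
      = ((s (n+3) - s (n+2)) * (s (n+2) - 2*s (n+1) + s n) -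
        (s (n+1) - s n) * (s (n+3) - 2*s (n+2) + s (n+1))) /
        ((s (n+3) - s (n+2)) * (s (n+2) - s (n+1)) * (s (n+1) - s n)) := by
    have : n+2+1 = n+3 := rfl
    rw [this]
    have : n+1+1 = n+2 := rfl
    rw [this]
    field_simp
    ring
  rw [key]
  have hden : (s (n+3) - s (n+2)) * (s (n+2) - s (n+1)) * (s (n+1) - s n) ≠ 0 := by
    exact mul_ne_zero (mul_ne_zero h3 h2) h1
  simp only [show n+2+1 = n+3 from rfl, show n+1+1 = n+2 from rfl]
  rw [div_div_eq_mul_div]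
  field_simp
  ring
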